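/- Let (β,δ) lie in the polynomial regime 𝒫 and let 0 < ε < δ/2. Then, as N → ∞, the partial Green-function sum Σ_{n=⌈N^{1−δ/2}⌉}^{⌊N^{1−ε}⌋} G_N(⌈N^{1−δ/2}⌉, n) is o(N^{(1−β)/2}), i.e. N^{−(1−β)/2} · Σ_{n=⌈N^{1−δ/2}⌉}^{⌊N^{1−ε}⌋} G_N(⌈N^{1−δ/2}⌉, n) → 0. -/

import Mathlib

/-!
Write `s = N^{-δ}`. Since `p_k - q_k = (s - k/N)/(1 - s)` and `N^β/4 ≤ q_k ≤ N^β` for `k ≤ N/2`,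
the ratio `p_k/q_k` is at most `1 + 8s/N^β` for every such `k`, at most `1` once `k ≥ N^{1-δ}`,
and at most `1 - n₀/(2N^{1+β})` once `k ≥ n₀ ≥ 2N^{1-δ}`. Because `2δ + β > 1`, the first regime
only contributes a factor `(1 + 8s/N^β)^{N^{1-δ}} ≤ e`, so
`G_N(n₀, n) ≤ (4e/N^β)(1 - n₀/(2N^{1+β}))^{n-n₀}`. Summing the geometric series gives
`Σ_n G_N(n₀, n) ≤ 8eN/n₀ ≤ 8e N^{δ/2}`, which is `o(N^{(1-β)/2})` because `δ < 1 - β`.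
-/

open Filter Finset

namespace MullerRatchet7

/-- Per-capita upward rate of the time-rescaled best-class process:
`p_n = (1/(2m) + 1/ρ)(1 − n/N)` with `m = N^{−β}`, `ρ = 1 − N^{−δ}`. -/
noncomputable def pr (β δ : ℝ) (N n : ℕ) : ℝ :=
  (1 / (2 * (N:ℝ)^(-β)) + 1 / (1 - (N:ℝ)^(-δ))) * (1 - (n:ℝ)/(N:ℝ))

/-- Per-capita downward rate `q_n = (1/(2m))(1 − n/N) + 1` with `m = N^{−β}`. -/
noncomputable def qr (β : ℝ) (N n : ℕ) : ℝ :=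
  (1 / (2 * (N:ℝ)^(-β))) * (1 - (n:ℝ)/(N:ℝ)) + 1

/-- Green function `G_N(n₀,n) = (1/(n q_n)) Σ_{l=0}^{min(n₀,n)−1} ∏_{k=l+1}^{n−1} p_k/q_k`. -/
noncomputable def G (β δ : ℝ) (N n₀ n : ℕ) : ℝ :=
  (1 / ((n:ℝ) * qr β N n)) * ∑ l ∈ Finset.range (min n₀ n),
    ∏ k ∈ Finset.Icc (l+1) (n-1), pr β δ N k / qr β N k

theorem prod_Icc_le_pow_mul_pow {f : ℕ → ℝ} {a b K m : ℕ} {A r : ℝ} (ha : 1 ≤ a) (ham : a ≤ m)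
    (hA : 1 ≤ A) (hr : 0 ≤ r) (hf0 : ∀ k ∈ Icc a b, 0 ≤ f k) (hfA : ∀ k ∈ Icc a b, f k ≤ A)
    (hf1 : ∀ k ∈ Icc a b, K < k → f k ≤ 1) (hfr : ∀ k ∈ Icc a b, m ≤ k → f k ≤ r) :
    ∏ k ∈ Icc a b, f k ≤ A ^ K * r ^ (b + 1 - m) := by
  have hcardK : #{k ∈ Icc a b | k ≤ K} ≤ K := by
    calc #{k ∈ Icc a b | k ≤ K} ≤ #(Icc 1 K) :=
          card_le_card fun k hk => by simp only [mem_filter, mem_Icc] at hk ⊢; omega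
      _ = K := by simp
  have hcardm : #{k ∈ Icc a b | m ≤ k} = b + 1 - m := by
    rw [show {k ∈ Icc a b | m ≤ k} = Icc m b by ext k; simp only [mem_filter, mem_Icc]; omega]
    simp
  calc ∏ k ∈ Icc a b, f k
      ≤ ∏ k ∈ Icc a b, (if k ≤ K then A else 1) * (if m ≤ k then r else 1) := by
        refine prod_le_prod hf0 fun k hk => ?_
        split_ifs with hkK hmk hmk
        · exact (hfr k hk hmk).trans (le_mul_of_one_le_left hr hA)
        · simpa using hfA k hk
        · simpa using hfr k hk hmk
        · simpa using hf1 k hk (by omega)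
    _ = A ^ #{k ∈ Icc a b | k ≤ K} * r ^ (b + 1 - m) := by
        rw [prod_mul_distrib, prod_ite, prod_ite, ← hcardm]
        simp
    _ ≤ A ^ K * r ^ (b + 1 - m) := by gcongr

theorem sum_Icc_pow_sub_le {r : ℝ} (hr0 : 0 ≤ r) (hr1 : r < 1) (a b : ℕ) :
    ∑ n ∈ Icc a b, r ^ (n - a) ≤ (1 - r)⁻¹ := by
  rw [← Ico_add_one_right_eq_Icc, sum_Ico_eq_sum_range, ← Nat.Ico_zero_eq_range]
  simpa using geom_sum_Ico_le_of_lt_one (m := 0) (n := b + 1 - a) hr0 hr1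

section Rates

variable {β δ : ℝ} {N k : ℕ}

theorem pr_sub_qr (hs : (N:ℝ)^(-δ) ≠ 1) :
    pr β δ N k - qr β N k = ((N:ℝ)^(-δ) - k / N) / (1 - (N:ℝ)^(-δ)) := by
  have : 1 - (N:ℝ)^(-δ) ≠ 0 := sub_ne_zero.mpr hs.symm
  simp only [pr, qr]
  field_simp
  ring

theorem qr_eq (hN : 0 < N) : qr β N k = (N:ℝ)^β / 2 * (1 - k / N) + 1 := by
  rw [qr, Real.rpow_neg (by positivity)]
  field_simp

theorem one_le_qr (hk : k ≤ N) : 1 ≤ qr β N k := by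
  have : (k:ℝ) / N ≤ 1 := div_le_one_of_le₀ (by exact_mod_cast hk) (by positivity)
  have : 0 ≤ 1 / (2 * (N:ℝ)^(-β)) := by positivity
  simp only [qr]
  nlinarith

theorem rpow_div_four_le_qr (hN : 0 < N) (hk : 2 * k ≤ N) : (N:ℝ)^β / 4 ≤ qr β N k := by
  have : (k:ℝ) / N ≤ 1 / 2 := by
    have : (2:ℝ) * k ≤ N := by exact_mod_cast hk
    rw [div_le_iff₀ (by positivity)]
    linarith
  have : 0 ≤ (N:ℝ)^β := by positivity
  rw [qr_eq hN]
  nlinarith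

theorem qr_le_rpow (hN : 0 < N) (hβ : 2 ≤ (N:ℝ)^β) : qr β N k ≤ (N:ℝ)^β := by
  have : 0 ≤ (k:ℝ) / N := by positivity
  rw [qr_eq hN]
  nlinarith

theorem pr_div_qr_nonneg (hs : (N:ℝ)^(-δ) < 1) (hk : k ≤ N) : 0 ≤ pr β δ N k / qr β N k := by
  have : (k:ℝ) / N ≤ 1 := div_le_one_of_le₀ (by exact_mod_cast hk) (by positivity)
  have : 0 < 1 - (N:ℝ)^(-δ) := by linarith
  have hq := one_le_qr (β := β) hk
  unfold pr
  exact div_nonneg (mul_nonneg (by positivity) (by linarith)) (by linarith)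

theorem pr_div_qr_eq_one_add (hk : k ≤ N) :
    pr β δ N k / qr β N k = 1 + (pr β δ N k - qr β N k) / qr β N k := by
  have := one_le_qr (β := β) hk
  field_simp
  ring

theorem pr_div_qr_le_one_add (hN : 0 < N) (hs : (N:ℝ)^(-δ) ≤ 1/2) (hk : 2 * k ≤ N) :
    pr β δ N k / qr β N k ≤ 1 + 8 * (N:ℝ)^(-δ) / (N:ℝ)^β := by
  have hs0 : 0 ≤ (N:ℝ)^(-δ) := by positivity
  have hq := rpow_div_four_le_qr (β := β) hN hk
  have hβ : 0 < (N:ℝ)^β := by positivity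
  have hdiff : pr β δ N k - qr β N k ≤ 2 * (N:ℝ)^(-δ) := by
    rw [pr_sub_qr (by linarith), div_le_iff₀ (by linarith)]
    have : 0 ≤ (k:ℝ) / N := by positivity
    nlinarith
  rw [pr_div_qr_eq_one_add (by omega)]
  gcongr 1 + ?_
  calc (pr β δ N k - qr β N k) / qr β N k ≤ 2 * (N:ℝ)^(-δ) / qr β N k := by gcongr; linarith
    _ ≤ 2 * (N:ℝ)^(-δ) / ((N:ℝ)^β / 4) := by gcongr
    _ = 8 * (N:ℝ)^(-δ) / (N:ℝ)^β := by field_simp; ring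

theorem pr_div_qr_le_one (hs : (N:ℝ)^(-δ) < 1) (hsk : (N:ℝ)^(-δ) ≤ k / N) (hk : k ≤ N) :
    pr β δ N k / qr β N k ≤ 1 := by
  have hq := one_le_qr (β := β) hk
  rw [div_le_one (by linarith), ← sub_nonpos, pr_sub_qr hs.ne]
  exact div_nonpos_of_nonpos_of_nonneg (by linarith) (by linarith)

theorem pr_div_qr_le_one_sub {m : ℕ} (hN : 0 < N) (hβ : 2 ≤ (N:ℝ)^β) (hs : (N:ℝ)^(-δ) < 1)
    (hsm : 2 * N * (N:ℝ)^(-δ) ≤ m) (hmk : m ≤ k) (hk : k ≤ N) :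
    pr β δ N k / qr β N k ≤ 1 - m / (2 * N * (N:ℝ)^β) := by
  have hq1 := one_le_qr (β := β) hk
  have hq := qr_le_rpow (k := k) hN hβ
  have hsm' : (N:ℝ)^(-δ) ≤ m / (2 * N) := by rw [le_div_iff₀ (by positivity)]; linarith
  have hmk' : (m:ℝ) / N ≤ k / N := by gcongr
  have hgap : m / (2 * N) ≤ k / N - (N:ℝ)^(-δ) := by
    have : (m:ℝ) / N = m / (2 * N) + m / (2 * N) := by field_simp; ring
    linarith
  have hdiff : pr β δ N k - qr β N k ≤ -(m / (2 * N)) := by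
    rw [pr_sub_qr hs.ne, div_le_iff₀ (by linarith)]
    have : 0 ≤ m / (2 * N) * (N:ℝ)^(-δ) := by positivity
    linarith
  calc pr β δ N k / qr β N k = 1 + (pr β δ N k - qr β N k) / qr β N k := pr_div_qr_eq_one_add hk
    _ ≤ 1 + -(m / (2 * N)) / qr β N k := by gcongr
    _ ≤ 1 + -(m / (2 * N)) / (N:ℝ)^β := by
        rw [neg_div, neg_div]
        gcongr
    _ = 1 - m / (2 * N * (N:ℝ)^β) := by field_simp; ring

end Rates

section Green

variable {β δ : ℝ} {N n₀ n K : ℕ}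

theorem G_nonneg (hs : (N:ℝ)^(-δ) < 1) (hn : n ≤ N) : 0 ≤ G β δ N n₀ n := by
  have hq := one_le_qr (β := β) hn
  refine mul_nonneg (by positivity) (sum_nonneg fun l _ => prod_nonneg fun k hk => ?_)
  exact pr_div_qr_nonneg hs (by simp only [mem_Icc] at hk; omega)

theorem sum_Icc_G_nonneg {a M : ℕ} (hs : (N:ℝ)^(-δ) < 1) (hM : M ≤ N) :
    0 ≤ ∑ n ∈ Icc a M, G β δ N n₀ n :=
  sum_nonneg fun _ hn => G_nonneg hs ((mem_Icc.mp hn).2.trans hM)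

theorem natCast_div_two_mul_mul_rpow_le_one {m : ℕ} (hN : 0 < N) (hβ : 2 ≤ (N:ℝ)^β) (hm : m ≤ N) :
    m / (2 * N * (N:ℝ)^β) ≤ 1 := by
  have : (m:ℝ) ≤ N := by exact_mod_cast hm
  rw [div_le_one (by positivity)]
  nlinarith

theorem prod_pr_div_qr_le {l : ℕ} (hN : 0 < N) (hβ : 2 ≤ (N:ℝ)^β) (hs : (N:ℝ)^(-δ) ≤ 1/2)
    (hK : N * (N:ℝ)^(-δ) ≤ K + 1) (hn₀ : 2 * N * (N:ℝ)^(-δ) ≤ n₀) (hl : l < n₀) (hn₀n : n₀ ≤ n)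
    (hn : 2 * n ≤ N) :
    ∏ k ∈ Icc (l + 1) (n - 1), pr β δ N k / qr β N k
      ≤ (1 + 8 * (N:ℝ)^(-δ) / (N:ℝ)^β) ^ K * (1 - n₀ / (2 * N * (N:ℝ)^β)) ^ (n - n₀) := by
  have hx : (0:ℝ) < N := by exact_mod_cast hN
  have hs1 : (N:ℝ)^(-δ) < 1 := by linarith
  have hr := natCast_div_two_mul_mul_rpow_le_one hN hβ (show n₀ ≤ N by omega)
  rw [show n - n₀ = n - 1 + 1 - n₀ by omega]
  have hA : 1 ≤ 1 + 8 * (N:ℝ)^(-δ) / (N:ℝ)^β := le_add_of_nonneg_right (by positivity)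
  refine prod_Icc_le_pow_mul_pow (Nat.le_add_left 1 l) hl hA (sub_nonneg.mpr hr)
    (fun k hk => ?_) (fun k hk => ?_) (fun k hk hKk => ?_) (fun k hk hn₀k => ?_) <;>
    simp only [mem_Icc] at hk
  · exact pr_div_qr_nonneg hs1 (by omega)
  · exact pr_div_qr_le_one_add hN hs (by omega)
  · refine pr_div_qr_le_one hs1 ?_ (by omega)
    have : (K:ℝ) + 1 ≤ k := by exact_mod_cast hKk
    rw [le_div_iff₀ hx]
    linarith
  · exact pr_div_qr_le_one_sub hN hβ hs1 hn₀ hn₀k (by omega)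

theorem G_le (hN : 0 < N) (hβ : 2 ≤ (N:ℝ)^β) (hs : (N:ℝ)^(-δ) ≤ 1/2)
    (hK : N * (N:ℝ)^(-δ) ≤ K + 1) (hKs : K * (8 * (N:ℝ)^(-δ) / (N:ℝ)^β) ≤ 1)
    (hn₀ : 2 * N * (N:ℝ)^(-δ) ≤ n₀) (hn₀n : n₀ ≤ n) (hn : 2 * n ≤ N) :
    G β δ N n₀ n ≤ 4 * Real.exp 1 / (N:ℝ)^β * (1 - n₀ / (2 * N * (N:ℝ)^β)) ^ (n - n₀) := by
  set r := 1 - n₀ / (2 * N * (N:ℝ)^β)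
  have hr : 0 ≤ r := sub_nonneg.mpr (natCast_div_two_mul_mul_rpow_le_one hN hβ (by omega))
  have hpow : (1 + 8 * (N:ℝ)^(-δ) / (N:ℝ)^β) ^ K ≤ Real.exp 1 := by
    calc (1 + 8 * (N:ℝ)^(-δ) / (N:ℝ)^β) ^ K ≤ Real.exp (8 * (N:ℝ)^(-δ) / (N:ℝ)^β) ^ K := by
          gcongr
          linarith [Real.add_one_le_exp (8 * (N:ℝ)^(-δ) / (N:ℝ)^β)]
      _ ≤ Real.exp 1 := by rw [← Real.exp_nat_mul]; exact Real.exp_le_exp.mpr hKs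
  have hprod : ∀ l ∈ range n₀, ∏ k ∈ Icc (l + 1) (n - 1), pr β δ N k / qr β N k
      ≤ Real.exp 1 * r ^ (n - n₀) := fun l hl => by
    refine (prod_pr_div_qr_le hN hβ hs hK hn₀ (mem_range.mp hl) hn₀n hn).trans ?_
    gcongr
  have hq := rpow_div_four_le_qr (β := β) hN hn
  have hq1 := one_le_qr (β := β) (show n ≤ N by omega)
  have hn₀pos : (0:ℝ) < n₀ := lt_of_lt_of_le (by positivity) hn₀
  calc G β δ N n₀ n
      ≤ 1 / (n * qr β N n) * (n₀ * (Real.exp 1 * r ^ (n - n₀))) := by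
        rw [G, min_eq_left hn₀n]
        refine mul_le_mul_of_nonneg_left ?_ (by positivity)
        simpa using sum_le_card_nsmul _ _ _ hprod
    _ ≤ 1 / (n₀ * ((N:ℝ)^β / 4)) * (n₀ * (Real.exp 1 * r ^ (n - n₀))) := by
        gcongr
    _ = 4 * Real.exp 1 / (N:ℝ)^β * r ^ (n - n₀) := by field_simp

theorem sum_Icc_G_le {M : ℕ} (hN : 0 < N) (hβ : 2 ≤ (N:ℝ)^β) (hs : (N:ℝ)^(-δ) ≤ 1/2)
    (hK : N * (N:ℝ)^(-δ) ≤ K + 1) (hKs : K * (8 * (N:ℝ)^(-δ) / (N:ℝ)^β) ≤ 1)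
    (hn₀ : 2 * N * (N:ℝ)^(-δ) ≤ n₀) (hn₀N : n₀ ≤ N) (hM : 2 * M ≤ N) :
    ∑ n ∈ Icc n₀ M, G β δ N n₀ n ≤ 8 * Real.exp 1 * N / n₀ := by
  set r := 1 - n₀ / (2 * N * (N:ℝ)^β)
  have hn₀pos : (0:ℝ) < n₀ := lt_of_lt_of_le (by positivity) hn₀
  have hr0 : 0 ≤ r := sub_nonneg.mpr (natCast_div_two_mul_mul_rpow_le_one hN hβ hn₀N)
  have hr1 : r < 1 := sub_lt_self 1 (by positivity)
  calc ∑ n ∈ Icc n₀ M, G β δ N n₀ n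
      ≤ ∑ n ∈ Icc n₀ M, 4 * Real.exp 1 / (N:ℝ)^β * r ^ (n - n₀) :=
        sum_le_sum fun n hn => G_le hN hβ hs hK hKs hn₀ (mem_Icc.mp hn).1
          (by have := (mem_Icc.mp hn).2; omega)
    _ = 4 * Real.exp 1 / (N:ℝ)^β * ∑ n ∈ Icc n₀ M, r ^ (n - n₀) := (mul_sum _ _ _).symm
    _ ≤ 4 * Real.exp 1 / (N:ℝ)^β * (1 - r)⁻¹ := by gcongr; exact sum_Icc_pow_sub_le hr0 hr1 _ _
    _ = 8 * Real.exp 1 * N / n₀ := by simp only [r, sub_sub_cancel]; field_simp; ring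

end Green

section RealPowers

variable {x β δ : ℝ}

theorem rpow_one_sub_eq_mul (hx : 0 < x) (δ : ℝ) : x^(1 - δ) = x * x^(-δ) := by
  rw [sub_eq_add_neg, Real.rpow_add hx, Real.rpow_one]

theorem two_mul_mul_rpow_neg_le (hx : 0 < x) (hδ : 2 ≤ x^(δ/2)) :
    2 * x * x^(-δ) ≤ x^(1 - δ/2) := by
  rw [show 1 - δ/2 = (1 - δ) + δ/2 by ring, Real.rpow_add hx, rpow_one_sub_eq_mul hx]
  nlinarith [mul_le_mul_of_nonneg_left hδ (by positivity : 0 ≤ x * x^(-δ))]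

theorem rpow_one_sub_mul_le_one (hx : 0 < x) (hA : 8 ≤ x^(2*δ + β - 1)) :
    x^(1 - δ) * (8 * x^(-δ) / x^β) ≤ 1 := by
  have e : x^(1 - δ) * x^(-δ) / x^β = (x^(2*δ + β - 1))⁻¹ := by
    rw [← Real.rpow_add hx, ← Real.rpow_sub hx, ← Real.rpow_neg hx.le]
    ring_nf
  calc x^(1 - δ) * (8 * x^(-δ) / x^β) = 8 / x^(2*δ + β - 1) := by rw [div_eq_mul_inv 8, ← e]; ring
    _ ≤ 1 := by rwa [div_le_one (by positivity)]

end RealPowers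

theorem sum_G_window_mem_Icc {β δ ε : ℝ} {N : ℕ} (hN : 2 ≤ N) (hβ : 2 ≤ (N:ℝ)^β)
    (hδ : 2 ≤ (N:ℝ)^(δ/2)) (hε : 2 ≤ (N:ℝ)^ε) (hA : 8 ≤ (N:ℝ)^(2*δ+β-1)) :
    ∑ n ∈ Icc ⌈(N:ℝ)^(1 - δ/2)⌉₊ ⌊(N:ℝ)^(1 - ε)⌋₊, G β δ N ⌈(N:ℝ)^(1 - δ/2)⌉₊ n
      ∈ Set.Icc 0 (8 * Real.exp 1 * (N:ℝ)^(δ/2)) := by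
  have hx2 : (2:ℝ) ≤ N := by exact_mod_cast hN
  have hx : (0:ℝ) < N := by linarith
  have hxδ := rpow_one_sub_eq_mul hx δ
  have hxδ2 : (N:ℝ)^(1 - δ/2) = (N:ℝ) / (N:ℝ)^(δ/2) := by rw [Real.rpow_sub hx, Real.rpow_one]
  have hxε : (N:ℝ)^(1 - ε) = (N:ℝ) / (N:ℝ)^ε := by rw [Real.rpow_sub hx, Real.rpow_one]
  have hs : (N:ℝ)^(-δ) ≤ 1/2 := by
    rw [Real.rpow_neg hx.le, show δ = δ/2 + δ/2 by ring, Real.rpow_add hx]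
    rw [inv_le_comm₀ (by positivity) (by norm_num)]
    nlinarith
  have hn₀N : (N:ℝ)^(1 - δ/2) ≤ (N:ℝ) := by
    rw [hxδ2, div_le_iff₀ (by positivity)]
    nlinarith
  have hM : 2 * ⌊(N:ℝ)^(1 - ε)⌋₊ ≤ N := by
    have : (⌊(N:ℝ)^(1 - ε)⌋₊:ℝ) ≤ (N:ℝ) / (N:ℝ)^ε := hxε ▸ Nat.floor_le (by positivity)
    have : (N:ℝ) / (N:ℝ)^ε ≤ (N:ℝ) / 2 := by gcongr
    exact_mod_cast (show ((2 * ⌊(N:ℝ)^(1 - ε)⌋₊ : ℕ) : ℝ) ≤ (N:ℝ) by push_cast; linarith)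
  refine ⟨sum_Icc_G_nonneg (by linarith) (by omega), ?_⟩
  calc ∑ n ∈ Icc ⌈(N:ℝ)^(1 - δ/2)⌉₊ ⌊(N:ℝ)^(1 - ε)⌋₊, G β δ N ⌈(N:ℝ)^(1 - δ/2)⌉₊ n
      ≤ 8 * Real.exp 1 * (N:ℝ) / ⌈(N:ℝ)^(1 - δ/2)⌉₊ := by
        refine sum_Icc_G_le (K := ⌊(N:ℝ)^(1 - δ)⌋₊) (by omega) hβ hs ?_ ?_
          ((two_mul_mul_rpow_neg_le hx hδ).trans (Nat.le_ceil _)) (Nat.ceil_le.mpr hn₀N) hM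
        · exact hxδ ▸ (Nat.lt_floor_add_one _).le
        · exact (mul_le_mul_of_nonneg_right (Nat.floor_le (by positivity)) (by positivity)).trans
            (rpow_one_sub_mul_le_one hx hA)
    _ ≤ 8 * Real.exp 1 * (N:ℝ) / (N:ℝ)^(1 - δ/2) := by gcongr; exact Nat.le_ceil _
    _ = 8 * Real.exp 1 * (N:ℝ)^(δ/2) := by rw [hxδ2]; field_simp

theorem statement7_general (β δ ε : ℝ)
    (hβ0 : 0 < β)
    (hδ1 : (1 - β)/2 < δ) (hδ2 : δ < 1 - β)
    (hε0 : 0 < ε) :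
    Tendsto (fun N : ℕ =>
        (N:ℝ)^(-((1 - β)/2)) *
          ∑ n ∈ Finset.Icc ⌈(N:ℝ)^(1 - δ/2)⌉₊ ⌊(N:ℝ)^(1 - ε)⌋₊,
            G β δ N ⌈(N:ℝ)^(1 - δ/2)⌉₊ n)
      atTop (nhds 0) := by
  have hδ0 : 0 < δ := by linarith
  have hnat : Tendsto (fun N : ℕ => (N:ℝ)) atTop atTop := tendsto_natCast_atTop_atTop
  have hlarge : ∀ {a : ℝ} (C : ℝ), 0 < a → ∀ᶠ N : ℕ in atTop, C ≤ (N:ℝ)^a := fun C ha =>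
    ((tendsto_rpow_atTop ha).comp hnat).eventually_ge_atTop C
  have hbound :
      Tendsto (fun N : ℕ => 8 * Real.exp 1 * (N:ℝ)^(-((1 - β)/2 - δ/2))) atTop (nhds 0) := by
    have := ((tendsto_rpow_neg_atTop (show 0 < (1 - β)/2 - δ/2 by linarith)).comp hnat).const_mul
      (8 * Real.exp 1)
    rwa [mul_zero] at this
  have hev : ∀ᶠ N : ℕ in atTop, (N:ℝ)^(-((1 - β)/2)) *
          ∑ n ∈ Finset.Icc ⌈(N:ℝ)^(1 - δ/2)⌉₊ ⌊(N:ℝ)^(1 - ε)⌋₊, G β δ N ⌈(N:ℝ)^(1 - δ/2)⌉₊ n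
        ∈ Set.Icc 0 (8 * Real.exp 1 * (N:ℝ)^(-((1 - β)/2 - δ/2))) := by
    filter_upwards [eventually_ge_atTop 2, hlarge 2 hβ0, hlarge 2 (half_pos hδ0), hlarge 2 hε0,
      hlarge 8 (show 0 < 2*δ + β - 1 by linarith)] with N hN hβ hδ hε hA
    obtain ⟨h0, h1⟩ := sum_G_window_mem_Icc hN hβ hδ hε hA
    have hx : (0:ℝ) < N := by positivity
    refine ⟨mul_nonneg (by positivity) h0, ?_⟩
    rw [show -((1 - β)/2 - δ/2) = -((1 - β)/2) + δ/2 by ring, Real.rpow_add hx]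
    have := mul_le_mul_of_nonneg_left h1 (Real.rpow_nonneg hx.le (-((1 - β)/2)))
    linarith
  exact squeeze_zero' (hev.mono fun _ h => h.1) (hev.mono fun _ h => h.2) hbound

/-- In the polynomial regime `𝒫`, for `0 < ε < δ/2`,
`Σ_{n=⌈N^{1−δ/2}⌉}^{⌊N^{1−ε}⌋} G_N(⌈N^{1−δ/2}⌉, n) = o(N^{(1−β)/2})`. -/
theorem statement7 (β δ ε : ℝ)
    (hβ0 : 0 < β) (hβ1 : β < 1)
    (hδ1 : (1 - β)/2 < δ) (hδ2 : δ < 1 - β)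
    (hε0 : 0 < ε) (hε1 : ε < δ/2) :
    Tendsto (fun N : ℕ =>
        (N:ℝ)^(-((1 - β)/2)) *
          ∑ n ∈ Finset.Icc ⌈(N:ℝ)^(1 - δ/2)⌉₊ ⌊(N:ℝ)^(1 - ε)⌋₊,
            G β δ N ⌈(N:ℝ)^(1 - δ/2)⌉₊ n)
      atTop (nhds 0) :=
  statement7_general β δ ε hβ0 hδ1 hδ2 hε0

end MullerRatchet7
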